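/- Let G be the cartesian product of a finite vertex-transitive graph H with the cycle ℤ/nℤ, and let ω: E(G) → {a,b} be uniform i.i.d. (0<a<b). Let c_G(ω) be the minimum ω-length of a circumference path (a closed path whose projection to ℤ/nℤ has winding degree 1). Then for every edge e of G, P[ρ_e c_G < 0] ≤ (b/a)·|V(H)|^{-1}, where ρ_e c_G := (c_G - c_G∘σ_e)/2 and σ_e flips the value of ω at e. -/

import Mathlib

open Finset

/-- The edge set of the cartesian product of a graph on `α` with the cycle `ℤ/nℤ`:
horizontal edges (an edge of `H` in a fixed layer) and vertical edges (from `(v,t)`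
to `(v,t+1)`). -/
abbrev TorusEdge (α : Type*) (n : ℕ) : Type _ := (Sym2 α × ZMod n) ⊕ (α × ZMod n)

/-- One step of a walk in `H □ (ℤ/nℤ)`: `Sum.inl u` moves to `(u, t)` (along an
`H`-edge), `Sum.inr true` moves to `(v, t+1)`, `Sum.inr false` to `(v, t-1)`. -/
def cStep {α : Type*} {n : ℕ} : α × ZMod n → α ⊕ Bool → α × ZMod n
  | (_, t), Sum.inl u => (u, t)
  | (v, t), Sum.inr true => (v, t + 1)
  | (v, t), Sum.inr false => (v, t - 1)

/-- The endpoint of a walk in `H □ (ℤ/nℤ)`. -/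
def cWalkEnd {α : Type*} {n : ℕ} : α × ZMod n → List (α ⊕ Bool) → α × ZMod n
  | p, [] => p
  | p, st :: rest => cWalkEnd (cStep p st) rest

/-- Validity of a walk: every horizontal step must follow an edge of `H`. -/
def cWalkValid {α : Type*} {n : ℕ} (H : SimpleGraph α) :
    α × ZMod n → List (α ⊕ Bool) → Prop
  | _, [] => True
  | p, Sum.inl u :: rest => H.Adj p.1 u ∧ cWalkValid H (cStep p (Sum.inl u)) rest
  | p, Sum.inr s :: rest => cWalkValid H (cStep p (Sum.inr s)) rest

/-- The list of edges traversed by a walk in `H □ (ℤ/nℤ)`. -/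
def cWalkEdges {α : Type*} {n : ℕ} : α × ZMod n → List (α ⊕ Bool) → List (TorusEdge α n)
  | _, [] => []
  | p, Sum.inl u :: rest => Sum.inl (s(p.1, u), p.2) :: cWalkEdges (cStep p (Sum.inl u)) rest
  | p, Sum.inr true :: rest => Sum.inr (p.1, p.2) :: cWalkEdges (cStep p (Sum.inr true)) rest
  | p, Sum.inr false :: rest =>
      Sum.inr (p.1, p.2 - 1) :: cWalkEdges (cStep p (Sum.inr false)) rest

/-- The winding number of the projection of a walk to the cycle: the number of
`+1` vertical steps minus the number of `-1` vertical steps. -/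
def cWinding {α : Type*} [DecidableEq α] (steps : List (α ⊕ Bool)) : ℤ :=
  (steps.count (Sum.inr true) : ℤ) - (steps.count (Sum.inr false) : ℤ)

/-- Edge weight of a configuration `ω : E → Bool` (`false ↦ a`, `true ↦ b`). -/
noncomputable def cWt (a b : ℝ) {α : Type*} {n : ℕ} (ω : TorusEdge α n → Bool)
    (e : TorusEdge α n) : ℝ :=
  if ω e then b else a

/-- The first passage percolation circumference `c_G(ω)`: the minimal `ω`-length of a
closed walk in `G = H □ (ℤ/nℤ)` whose projection to the cycle has degree `1`,
i.e. whose winding number is `n`. -/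
noncomputable def circumLen (a b : ℝ) {α : Type*} [DecidableEq α] {n : ℕ}
    (H : SimpleGraph α) (ω : TorusEdge α n → Bool) : ℝ :=
  sInf {L : ℝ | ∃ (start : α × ZMod n) (steps : List (α ⊕ Bool)),
    cWalkValid H start steps ∧ cWalkEnd start steps = start ∧
    cWinding steps = (n : ℤ) ∧ ((cWalkEdges start steps).map (cWt a b ω)).sum = L}

/-- The discrete derivative `ρ_e f = (f - f∘σ_e)/2`. -/
noncomputable def cRho {α : Type*} [DecidableEq α] {n : ℕ} (e : TorusEdge α n)
    (f : (TorusEdge α n → Bool) → ℝ) : (TorusEdge α n → Bool) → ℝ :=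
  fun ω => (f ω - f (Function.update ω e (!ω e))) / 2

/-! If flipping `e` raises the circumference (`ρ_e c_G(ω) < 0`), then `e` lies on every nearly
optimal circumference walk. Such a walk with `ℓ` steps costs at least `a ℓ` and makes at least
`n` vertical steps, so an orbit `O` of `e` under `Aut H × ℤ/nℤ` contains at most `c_G(ω)/a`
pivotal edges, and at most `c_G(ω)/a - n` when `O` is horizontal. All edges of `O` are pivotal
with the same probability, and `𝔼 c_G ≤ n(a+b)/2` by comparison with a straight vertical loop,
so `|O| P[ρ_e c_G < 0] ≤ n(a+b)/(2a)`, resp. `≤ n(b-a)/(2a)`. Vertex-transitivity gives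
`|O| = n|V(H)|` for vertical `e` and `|O| ≥ n|V(H)|/2` for horizontal `e`. -/

theorem card_le_two_mul_card_image_of_mem {β : Type*} [DecidableEq β] (s : Finset β)
    (g : β → Sym2 β) (hg : ∀ x ∈ s, x ∈ g x) : s.card ≤ 2 * (s.image g).card := by
  refine card_le_mul_card_image s 2 fun p _ => ?_
  induction p using Sym2.ind with
  | _ x y =>
    calc (s.filter fun w => g w = s(x, y)).card ≤ ({x, y} : Finset β).card :=
          card_le_card fun w hw => by
            obtain ⟨hws, hgw⟩ := mem_filter.1 hw
            have hw' := hg w hws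
            rw [hgw, Sym2.mem_iff] at hw'
            simpa using hw'
      _ ≤ 2 := card_le_two

section

variable {α : Type*} {n : ℕ}

noncomputable def walkWeight (a b : ℝ) (ω : TorusEdge α n → Bool) (start : α × ZMod n)
    (steps : List (α ⊕ Bool)) : ℝ :=
  ((cWalkEdges start steps).map (cWt a b ω)).sum

theorem walkWeight_nonneg {a b : ℝ} (ha : 0 ≤ a) (hb : 0 ≤ b) (ω : TorusEdge α n → Bool)
    (start : α × ZMod n) (steps : List (α ⊕ Bool)) : 0 ≤ walkWeight a b ω start steps :=
  List.sum_nonneg fun _ hx => by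
    obtain ⟨f, -, rfl⟩ := List.mem_map.1 hx
    unfold cWt; split <;> assumption

theorem length_cWalkEdges (p : α × ZMod n) (steps : List (α ⊕ Bool)) :
    (cWalkEdges p steps).length = steps.length := by
  induction steps generalizing p with
  | nil => rfl
  | cons st rest ih =>
    rcases st with u | (_ | _) <;> simp [cWalkEdges, ih]

theorem countP_isLeft_cWalkEdges (p : α × ZMod n) (steps : List (α ⊕ Bool)) :
    (cWalkEdges p steps).countP (·.isLeft) = steps.countP (·.isLeft) := by
  induction steps generalizing p with
  | nil => rfl
  | cons st rest ih =>
    rcases st with u | (_ | _) <;> simp [cWalkEdges, List.countP_cons, ih]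

theorem mul_length_le_walkWeight {a b : ℝ} (hab : a ≤ b) (ω : TorusEdge α n → Bool)
    (start : α × ZMod n) (steps : List (α ⊕ Bool)) :
    a * steps.length ≤ walkWeight a b ω start steps := by
  rw [walkWeight, ← length_cWalkEdges start steps]
  induction cWalkEdges start steps with
  | nil => simp
  | cons f l ih =>
    have hf : a ≤ cWt a b ω f := by unfold cWt; split <;> simp [hab]
    simp only [List.map_cons, List.sum_cons, List.length_cons, Nat.cast_succ]
    linarith

theorem cWalkEnd_replicate_inr_true (v : α) (t : ZMod n) (k : ℕ) :
    cWalkEnd (v, t) (List.replicate k (Sum.inr true)) = (v, t + k) := by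
  induction k generalizing t with
  | zero => simp [cWalkEnd]
  | succ k ih =>
    rw [List.replicate_succ, cWalkEnd, cStep, ih, Nat.cast_succ, add_comm (k : ZMod n), add_assoc]

theorem cWalkValid_replicate_inr_true (H : SimpleGraph α) (p : α × ZMod n) (k : ℕ) :
    cWalkValid H p (List.replicate k (Sum.inr true)) := by
  induction k generalizing p with
  | zero => trivial
  | succ k ih => exact ih _

def torusEdgeEquiv (φ : α ≃ α) (r : ZMod n) : TorusEdge α n ≃ TorusEdge α n :=
  Equiv.sumCongr
    (Equiv.prodCongr
      { toFun := Sym2.map φ, invFun := Sym2.map φ.symm,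
        left_inv := fun q => by simp [Sym2.map_map],
        right_inv := fun q => by simp [Sym2.map_map] }
      (Equiv.addRight r))
    (Equiv.prodCongr φ (Equiv.addRight r))

theorem torusEdgeEquiv_symm (φ : α ≃ α) (r : ZMod n) :
    (torusEdgeEquiv φ r).symm = torusEdgeEquiv φ.symm (-r) := by
  ext ((⟨q, t⟩ | ⟨v, t⟩)) <;> simp [torusEdgeEquiv]

section WalkMap

variable (φ : α ≃ α) (r : ZMod n)

theorem cStep_map (p : α × ZMod n) (st : α ⊕ Bool) :
    cStep (φ.prodCongr (Equiv.addRight r) p) (Sum.map φ id st)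
      = φ.prodCongr (Equiv.addRight r) (cStep p st) := by
  obtain ⟨v, t⟩ := p
  rcases st with u | (_ | _) <;> simp [cStep, sub_add_eq_add_sub, add_right_comm]

theorem cWalkEnd_map (p : α × ZMod n) (steps : List (α ⊕ Bool)) :
    cWalkEnd (φ.prodCongr (Equiv.addRight r) p) (steps.map (Sum.map φ id))
      = φ.prodCongr (Equiv.addRight r) (cWalkEnd p steps) := by
  induction steps generalizing p with
  | nil => rfl
  | cons st rest ih => rw [List.map_cons, cWalkEnd, cWalkEnd, cStep_map, ih]

theorem cWalkEdges_map (p : α × ZMod n) (steps : List (α ⊕ Bool)) :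
    cWalkEdges (φ.prodCongr (Equiv.addRight r) p) (steps.map (Sum.map φ id))
      = (cWalkEdges p steps).map (torusEdgeEquiv φ r) := by
  induction steps generalizing p with
  | nil => rfl
  | cons st rest ih =>
    have hstep := cStep_map φ r p st
    rcases st with u | (_ | _) <;> simp only [Sum.map_inl, Sum.map_inr, id] at hstep <;>
      simp only [List.map_cons, Sum.map_inl, Sum.map_inr, id, cWalkEdges, hstep, ih] <;>
      simp [torusEdgeEquiv, Prod.map, sub_add_eq_add_sub]

theorem cWinding_map [DecidableEq α] (steps : List (α ⊕ Bool)) :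
    cWinding (steps.map (Sum.map φ id)) = cWinding steps := by
  have hcount (s : Bool) :
      (steps.map (Sum.map φ id)).count (Sum.inr s) = steps.count (Sum.inr s) := by
    rw [List.count_eq_countP, List.count_eq_countP, List.countP_map]
    exact List.countP_congr fun x _ => by rcases x with _ | _ <;> rfl
  rw [cWinding, cWinding, hcount, hcount]

theorem walkWeight_map (a b : ℝ) (ω : TorusEdge α n → Bool) (p : α × ZMod n)
    (steps : List (α ⊕ Bool)) :
    walkWeight a b ω (φ.prodCongr (Equiv.addRight r) p) (steps.map (Sum.map φ id))
      = walkWeight a b (ω ∘ torusEdgeEquiv φ r) p steps := by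
  rw [walkWeight, walkWeight, cWalkEdges_map, List.map_map]
  rfl

end WalkMap

theorem cWalkValid_map {H : SimpleGraph α} (φ : H ≃g H) (r : ZMod n) (p : α × ZMod n)
    (steps : List (α ⊕ Bool)) (h : cWalkValid H p steps) :
    cWalkValid H (φ.toEquiv.prodCongr (Equiv.addRight r) p)
      (steps.map (Sum.map φ.toEquiv id)) := by
  induction steps generalizing p with
  | nil => trivial
  | cons st rest ih =>
    have hstep := cStep_map φ.toEquiv r p st
    rcases st with u | s <;> simp only [Sum.map_inl, Sum.map_inr, id] at hstep <;>
      simp only [List.map_cons, Sum.map_inl, Sum.map_inr, id, cWalkValid, hstep] at h ⊢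
    · exact ⟨φ.map_rel_iff.2 h.1, ih _ h.2⟩
    · exact ih _ h

variable [DecidableEq α]

def IsCircumWalk (H : SimpleGraph α) (start : α × ZMod n) (steps : List (α ⊕ Bool)) : Prop :=
  cWalkValid H start steps ∧ cWalkEnd start steps = start ∧ cWinding steps = n

def circumWeights (a b : ℝ) (H : SimpleGraph α) (ω : TorusEdge α n → Bool) : Set ℝ :=
  {L | ∃ start steps, IsCircumWalk H start steps ∧ walkWeight a b ω start steps = L}

theorem circumLen_eq_sInf (a b : ℝ) (H : SimpleGraph α) (ω : TorusEdge α n → Bool) :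
    circumLen a b H ω = sInf (circumWeights a b H ω) := by
  simp only [circumLen, circumWeights, IsCircumWalk, walkWeight, and_assoc]

theorem isCircumWalk_replicate_inr_true (H : SimpleGraph α) (v : α) :
    IsCircumWalk H ((v, 0) : α × ZMod n) (List.replicate n (Sum.inr true)) := by
  refine ⟨cWalkValid_replicate_inr_true H _ n, ?_, ?_⟩
  · simp [cWalkEnd_replicate_inr_true]
  · -- `Sum` has no `LawfulBEq` instance, so `List.count_replicate` does not apply.
    have hself : (Sum.inr true == (Sum.inr true : α ⊕ Bool)) = true := rfl
    have hother : (Sum.inr true == (Sum.inr false : α ⊕ Bool)) = false := rfl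
    simp [cWinding, List.count_eq_countP, List.countP_replicate, hself, hother]

theorem card_filter_isLeft_add_le_length {start : α × ZMod n} {steps : List (α ⊕ Bool)}
    (hwind : cWinding steps = n) :
    ((cWalkEdges start steps).toFinset.filter (·.isLeft)).card + n ≤ steps.length := by
  have hleft : ((cWalkEdges start steps).toFinset.filter (·.isLeft)).card
      ≤ steps.countP (·.isLeft) := by
    rw [← List.toFinset_filter, ← countP_isLeft_cWalkEdges start, List.countP_eq_length_filter]
    exact List.toFinset_card_le _
  have hvert : n ≤ steps.countP (fun x => ¬x.isLeft) := by
    have hcount : steps.count (Sum.inr true) ≤ steps.countP (fun x => ¬x.isLeft) :=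
      List.countP_mono_left fun x _ hx => by
        rcases x with _ | _
        · cases hx
        · rfl
    unfold cWinding at hwind
    omega
  rw [List.length_eq_countP_add_countP (·.isLeft)]
  omega

theorem IsCircumWalk.map {H : SimpleGraph α} {p : α × ZMod n}
    {steps : List (α ⊕ Bool)} (hW : IsCircumWalk H p steps) (φ : H ≃g H) (r : ZMod n) :
    IsCircumWalk H (φ.toEquiv.prodCongr (Equiv.addRight r) p)
      (steps.map (Sum.map φ.toEquiv id)) :=
  ⟨cWalkValid_map φ r p steps hW.1, by rw [cWalkEnd_map, hW.2.1],
    by rw [cWinding_map]; exact hW.2.2⟩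

theorem circumWeights_bddBelow {a b : ℝ} (ha : 0 ≤ a) (hb : 0 ≤ b) (H : SimpleGraph α)
    (ω : TorusEdge α n → Bool) : BddBelow (circumWeights a b H ω) :=
  ⟨0, by rintro L ⟨start, steps, -, rfl⟩; exact walkWeight_nonneg ha hb ω start steps⟩

theorem circumLen_le_walkWeight {a b : ℝ} (ha : 0 ≤ a) (hb : 0 ≤ b) {H : SimpleGraph α}
    (ω : TorusEdge α n → Bool) {start : α × ZMod n} {steps : List (α ⊕ Bool)}
    (hW : IsCircumWalk H start steps) : circumLen a b H ω ≤ walkWeight a b ω start steps := by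
  rw [circumLen_eq_sInf]
  exact csInf_le (circumWeights_bddBelow ha hb H ω) ⟨start, steps, hW, rfl⟩

theorem exists_walkWeight_lt [Nonempty α] {a b : ℝ} (ha : 0 ≤ a) (hb : 0 ≤ b)
    {H : SimpleGraph α} {ω : TorusEdge α n → Bool} {x : ℝ} (hx : circumLen a b H ω < x) :
    ∃ start steps, IsCircumWalk H start steps ∧ walkWeight a b ω start steps < x := by
  rw [circumLen_eq_sInf] at hx
  have hne : (circumWeights a b H ω).Nonempty :=
    ⟨_, _, _, isCircumWalk_replicate_inr_true H (Classical.arbitrary α), rfl⟩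
  obtain ⟨_, ⟨start, steps, hW, rfl⟩, hlt⟩ :=
    (csInf_lt_iff (circumWeights_bddBelow ha hb H ω) hne).1 hx
  exact ⟨start, steps, hW, hlt⟩

theorem circumWeights_comp_subset (a b : ℝ) {H : SimpleGraph α} (φ : H ≃g H)
    (r : ZMod n) (ω : TorusEdge α n → Bool) :
    circumWeights a b H (ω ∘ torusEdgeEquiv φ.toEquiv r) ⊆ circumWeights a b H ω := by
  rintro _ ⟨p, steps, hW, rfl⟩
  exact ⟨_, _, hW.map φ r, walkWeight_map φ.toEquiv r a b ω p steps⟩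

theorem circumLen_comp (a b : ℝ) {H : SimpleGraph α} (φ : H ≃g H)
    (r : ZMod n) (ω : TorusEdge α n → Bool) :
    circumLen a b H (ω ∘ torusEdgeEquiv φ.toEquiv r) = circumLen a b H ω := by
  have hback := circumWeights_comp_subset a b φ.symm (-r) (ω ∘ torusEdgeEquiv φ.toEquiv r)
  have hinv : ω ∘ torusEdgeEquiv φ.toEquiv r ∘ torusEdgeEquiv φ.symm.toEquiv (-r) = ω := by
    ext f
    rw [Function.comp_apply, Function.comp_apply, show φ.symm.toEquiv = φ.toEquiv.symm from rfl,
      ← torusEdgeEquiv_symm, Equiv.apply_symm_apply]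
  rw [Function.comp_assoc, hinv] at hback
  rw [circumLen_eq_sInf, circumLen_eq_sInf,
    (circumWeights_comp_subset a b φ r ω).antisymm hback]

theorem cRho_comp (a b : ℝ) {H : SimpleGraph α} (φ : H ≃g H) (r : ZMod n)
    (e : TorusEdge α n) (ω : TorusEdge α n → Bool) :
    cRho e (circumLen a b H) (ω ∘ torusEdgeEquiv φ.toEquiv r)
      = cRho (torusEdgeEquiv φ.toEquiv r e) (circumLen a b H) ω := by
  simp only [cRho, Function.comp_apply,
    ← Function.update_comp_eq_of_injective ω (torusEdgeEquiv φ.toEquiv r).injective,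
    circumLen_comp]

theorem cRho_neg_iff (e : TorusEdge α n) (c : (TorusEdge α n → Bool) → ℝ)
    (ω : TorusEdge α n → Bool) :
    cRho e c ω < 0 ↔ c ω < c (Function.update ω e (!ω e)) := by
  rw [cRho]
  constructor <;> intro h <;> linarith

theorem walkWeight_update_of_notMem (a b : ℝ) (ω : TorusEdge α n → Bool)
    {f : TorusEdge α n} (x : Bool) {start : α × ZMod n} {steps : List (α ⊕ Bool)}
    (hf : f ∉ cWalkEdges start steps) :
    walkWeight a b (Function.update ω f x) start steps = walkWeight a b ω start steps := by
  refine congrArg List.sum (List.map_congr_left fun g hg => ?_)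
  rw [cWt, cWt, Function.update_of_ne (by rintro rfl; exact hf hg)]

theorem mem_cWalkEdges_of_walkWeight_lt {a b : ℝ} (ha : 0 ≤ a) (hb : 0 ≤ b)
    {H : SimpleGraph α} {ω : TorusEdge α n → Bool} {f : TorusEdge α n} {x : Bool}
    {start : α × ZMod n} {steps : List (α ⊕ Bool)} (hW : IsCircumWalk H start steps)
    (hlt : walkWeight a b ω start steps < circumLen a b H (Function.update ω f x)) :
    f ∈ cWalkEdges start steps := by
  by_contra hf
  have hle := circumLen_le_walkWeight ha hb (Function.update ω f x) hW
  rw [walkWeight_update_of_notMem a b ω x hf] at hle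
  linarith

theorem exists_isCircumWalk_subset_cWalkEdges [Nonempty α] {a b : ℝ}
    (ha : 0 ≤ a) (hb : 0 ≤ b) (H : SimpleGraph α) (ω : TorusEdge α n → Bool)
    (P : Finset (TorusEdge α n)) (hP : ∀ f ∈ P, cRho f (circumLen a b H) ω < 0)
    {ε : ℝ} (hε : 0 < ε) :
    ∃ start steps, IsCircumWalk H start steps ∧
      walkWeight a b ω start steps < circumLen a b H ω + ε ∧
      P ⊆ (cWalkEdges start steps).toFinset := by
  set c := circumLen a b H
  set bounds := insert (c ω + ε) (P.image fun f => c (Function.update ω f (!ω f)))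
  have hlt : c ω < bounds.min' (insert_nonempty _ _) := by
    refine (lt_min'_iff _ _).2 fun y hy => ?_
    rcases mem_insert.1 hy with rfl | hy
    · linarith
    · obtain ⟨f, hf, rfl⟩ := mem_image.1 hy
      exact (cRho_neg_iff f c ω).1 (hP f hf)
  obtain ⟨start, steps, hW, hweight⟩ := exists_walkWeight_lt ha hb hlt
  refine ⟨start, steps, hW, hweight.trans_le (min'_le _ _ (mem_insert_self _ _)), ?_⟩
  intro f hf
  refine List.mem_toFinset.2 (mem_cWalkEdges_of_walkWeight_lt (ω := ω) (x := !ω f) ha hb hW ?_)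
  exact hweight.trans_le (min'_le _ _ (mem_insert_of_mem (mem_image_of_mem _ hf)))

theorem mul_card_pivotal_add_le_circumLen [Nonempty α] {a b : ℝ}
    (ha : 0 < a) (hab : a ≤ b) (H : SimpleGraph α) (O : Finset (TorusEdge α n)) (k : ℕ)
    (hO : ∀ start steps, IsCircumWalk H start steps →
      (O ∩ (cWalkEdges start steps).toFinset).card + k ≤ steps.length)
    (ω : TorusEdge α n → Bool) :
    a * ((O.filter fun f => cRho f (circumLen a b H) ω < 0).card + k) ≤ circumLen a b H ω := by
  refine le_of_forall_pos_lt_add fun ε hε => ?_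
  obtain ⟨start, steps, hW, hlt, hsub⟩ := exists_isCircumWalk_subset_cWalkEdges ha.le
    (ha.le.trans hab) H ω _ (fun f hf => (mem_filter.1 hf).2) hε
  have hcard : (O.filter fun f => cRho f (circumLen a b H) ω < 0).card + k ≤ steps.length :=
    le_trans (by gcongr; exact subset_inter (filter_subset _ _) hsub) (hO start steps hW)
  calc a * ((O.filter fun f => cRho f (circumLen a b H) ω < 0).card + k)
      ≤ a * steps.length := by gcongr; exact_mod_cast hcard
    _ ≤ walkWeight a b ω start steps := mul_length_le_walkWeight hab ω start steps
    _ < circumLen a b H ω + ε := hlt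

variable [Fintype α] [NeZero n]

theorem two_mul_sum_cWt (a b : ℝ) (f : TorusEdge α n) :
    2 * ∑ ω : TorusEdge α n → Bool, cWt a b ω f
      = 2 ^ Fintype.card (TorusEdge α n) * (a + b) := by
  have hflip : Function.Involutive
      fun ω : TorusEdge α n → Bool => Function.update ω f (!ω f) := fun ω => by simp
  have hsum : ∑ ω : TorusEdge α n → Bool, cWt a b (Function.update ω f (!ω f)) f
      = ∑ ω : TorusEdge α n → Bool, cWt a b ω f :=
    Equiv.sum_comp (hflip.toPerm _) fun ω => cWt a b ω f
  have hpair : ∀ ω : TorusEdge α n → Bool,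
      cWt a b ω f + cWt a b (Function.update ω f (!ω f)) f = a + b := by
    intro ω
    cases h : ω f <;> simp [cWt, h, add_comm]
  calc 2 * ∑ ω : TorusEdge α n → Bool, cWt a b ω f
      = ∑ ω : TorusEdge α n → Bool,
          (cWt a b ω f + cWt a b (Function.update ω f (!ω f)) f) := by
        rw [sum_add_distrib, hsum, two_mul]
    _ = 2 ^ Fintype.card (TorusEdge α n) * (a + b) := by
        simp [hpair, mul_add]

theorem two_mul_sum_walkWeight (a b : ℝ) (start : α × ZMod n)
    (steps : List (α ⊕ Bool)) :
    2 * ∑ ω : TorusEdge α n → Bool, walkWeight a b ω start steps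
      = 2 ^ Fintype.card (TorusEdge α n) * (steps.length * (a + b)) := by
  simp only [walkWeight]
  rw [← length_cWalkEdges start steps]
  induction cWalkEdges start steps with
  | nil => simp
  | cons f l ih =>
    simp only [List.map_cons, List.sum_cons, sum_add_distrib, mul_add, ih, two_mul_sum_cWt,
      List.length_cons, Nat.cast_succ]
    ring

theorem two_mul_sum_circumLen_le [Nonempty α] {a b : ℝ} (ha : 0 ≤ a) (hb : 0 ≤ b)
    (H : SimpleGraph α) :
    2 * ∑ ω : TorusEdge α n → Bool, circumLen a b H ω
      ≤ 2 ^ Fintype.card (TorusEdge α n) * (n * (a + b)) := by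
  have hloop := isCircumWalk_replicate_inr_true (n := n) H (Classical.arbitrary α)
  calc 2 * ∑ ω : TorusEdge α n → Bool, circumLen a b H ω
      ≤ 2 * ∑ ω : TorusEdge α n → Bool, walkWeight a b ω _ _ := by
        gcongr with ω
        exact circumLen_le_walkWeight ha hb ω hloop
    _ = _ := by rw [two_mul_sum_walkWeight, List.length_replicate]

noncomputable def pivotalConfigs (a b : ℝ)
    (H : SimpleGraph α) (e : TorusEdge α n) : Finset (TorusEdge α n → Bool) :=
  univ.filter fun ω => cRho e (circumLen a b H) ω < 0

theorem card_pivotalConfigs_torusEdgeEquiv (a b : ℝ)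
    {H : SimpleGraph α} (φ : H ≃g H) (r : ZMod n) (e : TorusEdge α n) :
    (pivotalConfigs a b H (torusEdgeEquiv φ.toEquiv r e)).card
      = (pivotalConfigs a b H e).card :=
  card_equiv ((torusEdgeEquiv φ.toEquiv r).symm.arrowCongr (Equiv.refl Bool)) fun ω => by
    simp only [pivotalConfigs, mem_filter, mem_univ, true_and, ← cRho_comp]
    rfl

theorem two_mul_card_orbit_mul_card_pivotalConfigs_le [Nonempty α]
    {a b : ℝ} (ha : 0 < a) (hab : a ≤ b) (H : SimpleGraph α) (e : TorusEdge α n)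
    (O : Finset (TorusEdge α n)) (k : ℕ)
    (horbit : ∀ f ∈ O, ∃ (φ : H ≃g H) (r : ZMod n), torusEdgeEquiv φ.toEquiv r e = f)
    (hO : ∀ start steps, IsCircumWalk H start steps →
      (O ∩ (cWalkEdges start steps).toFinset).card + k ≤ steps.length) :
    2 * a * (O.card * (pivotalConfigs a b H e).card + k * 2 ^ Fintype.card (TorusEdge α n))
      ≤ 2 ^ Fintype.card (TorusEdge α n) * (n * (a + b)) := by
  have hdouble : ∑ ω, ((O.filter fun f => cRho f (circumLen a b H) ω < 0).card : ℝ)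
      = O.card * (pivotalConfigs a b H e).card := by
    have hcomm : ∑ ω, (O.filter fun f => cRho f (circumLen a b H) ω < 0).card
        = ∑ f ∈ O, (pivotalConfigs a b H f).card := by
      simp only [card_filter, pivotalConfigs]
      exact sum_comm
    rw [← Nat.cast_sum, hcomm, sum_const_nat fun f hf => ?_, Nat.cast_mul]
    obtain ⟨φ, r, rfl⟩ := horbit f hf
    exact card_pivotalConfigs_torusEdgeEquiv a b φ r e
  calc 2 * a * (O.card * (pivotalConfigs a b H e).card + k * 2 ^ Fintype.card (TorusEdge α n))
      = 2 * ∑ ω, a * ((O.filter fun f => cRho f (circumLen a b H) ω < 0).card + k) := by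
        rw [← mul_sum, sum_add_distrib, hdouble, sum_const, card_univ, Fintype.card_fun,
          Fintype.card_bool, nsmul_eq_mul]
        push_cast
        ring
    _ ≤ 2 * ∑ ω, circumLen a b H ω := by
        gcongr with ω
        exact mul_card_pivotal_add_le_circumLen ha hab H O k hO ω
    _ ≤ _ := two_mul_sum_circumLen_le ha.le (ha.le.trans hab) H

theorem mul_card_pivotalConfigs_inr_le {H : SimpleGraph α}
    (htrans : ∀ u v : α, ∃ φ : H ≃g H, φ u = v) {a b : ℝ} (ha : 0 < a) (hab : a ≤ b)
    (v : α) (t : ZMod n) :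
    a * Fintype.card α * (pivotalConfigs a b H (Sum.inr (v, t))).card
      ≤ 2 ^ Fintype.card (TorusEdge α n) * b := by
  have : Nonempty α := ⟨v⟩
  set O : Finset (TorusEdge α n) := univ.map Function.Embedding.inr
  have horbit : ∀ f ∈ O, ∃ (φ : H ≃g H) (r : ZMod n),
      torusEdgeEquiv φ.toEquiv r (Sum.inr (v, t)) = f := by
    intro f hf
    obtain ⟨⟨u, s⟩, -, rfl⟩ := mem_map.1 hf
    obtain ⟨φ, hφ⟩ := htrans v u
    exact ⟨φ, s - t, by simp [torusEdgeEquiv, hφ]⟩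
  have hO : ∀ start steps, IsCircumWalk H start steps →
      (O ∩ (cWalkEdges start steps).toFinset).card + 0 ≤ steps.length := fun start steps _ =>
    calc (O ∩ (cWalkEdges start steps).toFinset).card + 0
        ≤ (cWalkEdges start steps).toFinset.card := card_le_card inter_subset_right
      _ ≤ steps.length := (List.toFinset_card_le _).trans (length_cWalkEdges start steps).le
  have hmain := two_mul_card_orbit_mul_card_pivotalConfigs_le ha hab H _ O 0 horbit hO
  have hcard : O.card = Fintype.card α * n := by simp [O]
  rw [hcard] at hmain
  push_cast at hmain
  have hn : (0 : ℝ) < n := by exact_mod_cast NeZero.pos n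
  have hdiv : 2 * (a * Fintype.card α * (pivotalConfigs a b H (Sum.inr (v, t))).card)
      ≤ 2 ^ Fintype.card (TorusEdge α n) * (a + b) :=
    le_of_mul_le_mul_right (by linarith) hn
  nlinarith [pow_pos (two_pos (α := ℝ)) (Fintype.card (TorusEdge α n))]

theorem mul_card_pivotalConfigs_inl_le {H : SimpleGraph α}
    (htrans : ∀ u v : α, ∃ φ : H ≃g H, φ u = v) {a b : ℝ} (ha : 0 < a) (hab : a ≤ b)
    (q : Sym2 α) (t : ZMod n) :
    a * Fintype.card α * (pivotalConfigs a b H (Sum.inl (q, t))).card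
      ≤ 2 ^ Fintype.card (TorusEdge α n) * b := by
  obtain ⟨u, hu⟩ : ∃ u, u ∈ q := q.ind fun x y => ⟨x, Sym2.mem_mk_left x y⟩
  have : Nonempty α := ⟨u⟩
  choose φ hφ using htrans u
  set I := univ.image fun w => q.map (φ w)
  set O : Finset (TorusEdge α n) := (I ×ˢ univ).map Function.Embedding.inl
  have horbit : ∀ f ∈ O, ∃ (ψ : H ≃g H) (r : ZMod n),
      torusEdgeEquiv ψ.toEquiv r (Sum.inl (q, t)) = f := by
    intro f hf
    obtain ⟨⟨p, s⟩, hps, rfl⟩ := mem_map.1 hf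
    obtain ⟨w, -, rfl⟩ := mem_image.1 (mem_product.1 hps).1
    exact ⟨φ w, s - t, by simp [torusEdgeEquiv]⟩
  have hO : ∀ start steps, IsCircumWalk H start steps →
      (O ∩ (cWalkEdges start steps).toFinset).card + n ≤ steps.length := by
    intro start steps hW
    refine le_trans ?_ (card_filter_isLeft_add_le_length (start := start) hW.2.2)
    gcongr
    intro f hf
    obtain ⟨hfO, hfW⟩ := mem_inter.1 hf
    obtain ⟨_, -, rfl⟩ := mem_map.1 hfO
    exact mem_filter.2 ⟨hfW, rfl⟩
  have hmain := two_mul_card_orbit_mul_card_pivotalConfigs_le ha hab H _ O n horbit hO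
  have hcard : O.card = I.card * n := by simp [O]
  have hI : (Fintype.card α : ℝ) ≤ 2 * I.card := by
    exact_mod_cast card_le_two_mul_card_image_of_mem univ _ fun w _ =>
      Sym2.mem_map.2 ⟨u, hu, hφ w⟩
  rw [hcard] at hmain
  push_cast at hmain
  have hn : (0 : ℝ) < n := by exact_mod_cast NeZero.pos n
  have hdiv : 2 * a * (I.card * (pivotalConfigs a b H (Sum.inl (q, t))).card
        + 2 ^ Fintype.card (TorusEdge α n)) ≤ 2 ^ Fintype.card (TorusEdge α n) * (a + b) :=
    le_of_mul_le_mul_right (by linarith) hn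
  have hN : (0 : ℝ) ≤ (pivotalConfigs a b H (Sum.inl (q, t))).card := Nat.cast_nonneg _
  nlinarith [mul_le_mul_of_nonneg_right hI (mul_nonneg ha.le hN),
    mul_pos (pow_pos (two_pos (α := ℝ)) (Fintype.card (TorusEdge α n))) ha]

end

/-- for `G = H □ (ℤ/nℤ)` with `H` finite vertex-transitive and uniform
i.i.d. edge weights in `{a,b}`, `0 < a < b`, every edge `e` of `G` satisfies
`P[ρ_e c_G < 0] ≤ (b/a)·|V(H)|⁻¹`. -/
theorem stmt16 {α : Type*} [Fintype α] [DecidableEq α] (H : SimpleGraph α)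
    (htrans : ∀ u v : α, ∃ φ : H ≃g H, φ u = v)
    (n : ℕ) [NeZero n] (a b : ℝ) (ha : 0 < a) (hab : a < b) (e : TorusEdge α n) :
    ((Finset.univ.filter fun ω : TorusEdge α n → Bool =>
        cRho e (circumLen a b H) ω < 0).card : ℝ)
        / 2 ^ Fintype.card (TorusEdge α n)
      ≤ (b / a) * (Fintype.card α : ℝ)⁻¹ := by
  have key : a * Fintype.card α * (pivotalConfigs a b H e).card
      ≤ 2 ^ Fintype.card (TorusEdge α n) * b := by
    rcases e with ⟨q, t⟩ | ⟨v, t⟩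
    · exact mul_card_pivotalConfigs_inl_le htrans ha hab.le q t
    · exact mul_card_pivotalConfigs_inr_le htrans ha hab.le v t
  have hα : (0 : ℝ) < Fintype.card α := by
    refine Nat.cast_pos.2 (Fintype.card_pos_iff.2 ?_)
    rcases e with ⟨q, -⟩ | ⟨v, -⟩
    · exact q.ind fun x _ => ⟨x⟩
    · exact ⟨v⟩
  rw [div_le_iff₀ (by positivity), ← div_eq_mul_inv, div_div, div_mul_eq_mul_div,
    le_div_iff₀ (by positivity)]
  rw [pivotalConfigs] at key
  linarith
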